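/- Let m, p ≥ 1 be coprime integers. Then the polynomial Z^p − U^m is irreducible in ℂ[U, Z], so R := ℂ[U, Z]/(Z^p − U^m) is an integral domain; moreover, denoting by u, z the images of U, Z in R and by F the field of fractions of R, there exists an element t ∈ F with t^p = u and t^m = z, and the integral closure of R in F equals the ℂ-subalgebra of F generated by t. -/

import Mathlib

section CuspAux
open Polynomial

noncomputable def innerE : MvPolynomial (Fin 1) ℂ ≃ₐ[ℂ] ℂ[X] :=
  (MvPolynomial.finSuccEquiv ℂ 0).trans (Polynomial.mapAlgEquiv (MvPolynomial.isEmptyAlgEquiv ℂ (Fin 0)))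

lemma innerE_X : innerE (MvPolynomial.X 0) = X := by
  simp [innerE, Polynomial.coe_mapAlgEquiv, MvPolynomial.finSuccEquiv_X_zero]

noncomputable def E : MvPolynomial (Fin 2) ℂ ≃ₐ[ℂ] (ℂ[X])[X] :=
  (MvPolynomial.finSuccEquiv ℂ 1).trans (Polynomial.mapAlgEquiv innerE)

lemma E_X0 : E (MvPolynomial.X 0) = X := by
  simp [E, MvPolynomial.finSuccEquiv_X_zero, Polynomial.coe_mapAlgEquiv]

lemma E_X1 : E (MvPolynomial.X 1) = C X := by
  have h1 : (1 : Fin 2) = Fin.succ 0 := rfl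
  rw [E, AlgEquiv.trans_apply, h1, MvPolynomial.finSuccEquiv_X_succ]
  rw [show ⇑(Polynomial.mapAlgEquiv innerE) = Polynomial.map (innerE : MvPolynomial (Fin 1) ℂ →+* ℂ[X]) from rfl,
    Polynomial.map_C, ← innerE_X]
  rfl

lemma E_C (c : ℂ) : E (MvPolynomial.C c) = C (C c) := by
  have h : MvPolynomial.C c = algebraMap ℂ (MvPolynomial (Fin 2) ℂ) c := rfl
  rw [h, AlgEquiv.commutes]
  simp [Polynomial.algebraMap_apply]

noncomputable def Psi (m p : ℕ) : (ℂ[X])[X] →+* ℂ[X] :=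
  eval₂RingHom (Polynomial.expand ℂ m).toRingHom (X ^ p)

lemma key (m p : ℕ) (hm : 0 < m) (hmp : Nat.Coprime m p)
    (r : (ℂ[X])[X]) (hdeg : r.degree < (m : WithBot ℕ)) (h0 : Psi m p r = 0) : r = 0 := by
  ext i j
  simp only [coeff_zero]
  by_cases hi : i ∈ r.support
  · have hilt : i < m := by
      have := Polynomial.le_degree_of_ne_zero (Polynomial.mem_support_iff.mp hi)
      exact_mod_cast lt_of_le_of_lt this hdeg
    have h := congrArg (fun q : ℂ[X] => q.coeff (p * i + m * j)) h0
    simp only [coeff_zero] at h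
    rw [Psi, coe_eval₂RingHom, eval₂_eq_sum, Polynomial.sum_def] at h
    rw [Polynomial.finset_sum_coeff] at h
    have hterm : ∀ e ∈ r.support, e ≠ i →
        ((Polynomial.expand ℂ m).toRingHom (r.coeff e) * (X ^ p) ^ e).coeff (p * i + m * j) = 0 := by
      intro e he hne
      have helt : e < m := by
        have := Polynomial.le_degree_of_ne_zero (Polynomial.mem_support_iff.mp he)
        exact_mod_cast lt_of_le_of_lt this hdeg
      rw [← pow_mul, coeff_mul_X_pow', AlgHom.toRingHom_eq_coe, AlgHom.coe_toRingHom]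
      split_ifs with hle
      · rw [Polynomial.coeff_expand hm]
        split_ifs with hdvd
        · exfalso
          obtain ⟨k, hk⟩ := hdvd
          have heq : p * i + m * j = p * e + m * k := by omega
          have h1 : p * i ≡ p * e [MOD m] := by
            have : (p * i + m * j) % m = (p * e + m * k) % m := by rw [heq]
            exact (show p * i % m = p * e % m by simpa [Nat.add_mul_mod_self_left] using this)
          have h2 : i ≡ e [MOD m] := Nat.ModEq.cancel_left_of_coprime hmp h1
          have : i % m = e % m := h2
          rw [Nat.mod_eq_of_lt hilt, Nat.mod_eq_of_lt helt] at this
          exact hne this.symm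
        · rfl
      · rfl
    rw [Finset.sum_eq_single_of_mem i hi hterm] at h
    rw [← pow_mul, coeff_mul_X_pow', AlgHom.toRingHom_eq_coe, AlgHom.coe_toRingHom] at h
    rw [if_pos (Nat.le_add_right _ _)] at h
    rw [Nat.add_sub_cancel_left, Polynomial.coeff_expand hm] at h
    rw [if_pos (Dvd.intro j rfl), Nat.mul_div_cancel_left j hm] at h
    exact h
  · rw [Polynomial.notMem_support_iff.mp hi, coeff_zero]

lemma Psi_X : Psi m p X = X ^ p := by simp [Psi]

lemma Psi_CX : Psi m p (C X) = X ^ m := by simp [Psi, Polynomial.expand_X]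

lemma Psi_CC (c : ℂ) : Psi m p (C (C c)) = C c := by simp [Psi]

lemma Psi_C (q : ℂ[X]) : Psi m p (C q) = Polynomial.expand ℂ m q := by simp [Psi]

lemma Psi_d (m p : ℕ) : Psi m p (X ^ m - C (X ^ p)) = 0 := by
  rw [map_sub, map_pow, Psi_X, Psi_C, map_pow, Polynomial.expand_X,
    ← pow_mul, ← pow_mul, mul_comm, sub_self]

lemma ker_Psi (m p : ℕ) (hm : 0 < m) (hmp : Nat.Coprime m p) :
    RingHom.ker (Psi m p) = Ideal.span {X ^ m - C (X ^ p)} := by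
  apply le_antisymm
  · intro f hf
    set d : (ℂ[X])[X] := X ^ m - C (X ^ p) with hd
    have hmonic : d.Monic := monic_X_pow_sub_C _ hm.ne'
    have hdiv := modByMonic_add_div f d
    have hr0 : Psi m p (f %ₘ d) = 0 := by
      have h1 : Psi m p f = 0 := hf
      have h2 : Psi m p (f %ₘ d) + Psi m p d * Psi m p (f /ₘ d) = Psi m p f := by
        rw [← map_mul, ← map_add, hdiv]
      rw [h1, Psi_d] at h2
      simpa using h2
    have hdeg : (f %ₘ d).degree < (m : WithBot ℕ) := by
      have := degree_modByMonic_lt f hmonic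
      rwa [hd, degree_X_pow_sub_C hm] at this
    have hr : f %ₘ d = 0 := key m p hm hmp _ hdeg hr0
    rw [Ideal.mem_span_singleton]
    have hfd : f = d * (f /ₘ d) := by conv_lhs => rw [← hdiv, hr, zero_add]
    exact ⟨f /ₘ d, hfd⟩
  · rw [Ideal.span_le, Set.singleton_subset_iff]
    exact Psi_d m p

noncomputable def phi (m p : ℕ) : MvPolynomial (Fin 2) ℂ →+* ℂ[X] :=
  (Psi m p).comp (E : MvPolynomial (Fin 2) ℂ →+* (ℂ[X])[X])

lemma phi_X0 : phi m p (MvPolynomial.X 0) = X ^ p := by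
  simp [phi, E_X0, Psi_X]

lemma phi_X1 : phi m p (MvPolynomial.X 1) = X ^ m := by
  simp [phi, E_X1, Psi_CX]

lemma phi_C (c : ℂ) : phi m p (MvPolynomial.C c) = C c := by
  simp [phi, E_C, Psi_CC]

lemma ker_phi (m p : ℕ) (hm : 0 < m) (hmp : Nat.Coprime m p) :
    RingHom.ker (phi m p) =
      Ideal.span {(MvPolynomial.X 1 ^ p - MvPolynomial.X 0 ^ m : MvPolynomial (Fin 2) ℂ)} := by
  ext f
  have hEg : E (MvPolynomial.X 1 ^ p - MvPolynomial.X 0 ^ m : MvPolynomial (Fin 2) ℂ)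
      = -(X ^ m - C (X ^ p)) := by
    rw [map_sub, map_pow, map_pow, E_X0, E_X1, ← C_pow]
    ring
  rw [RingHom.mem_ker, Ideal.mem_span_singleton]
  have h1 : phi m p f = 0 ↔ E f ∈ RingHom.ker (Psi m p) := Iff.rfl
  rw [h1, ker_Psi m p hm hmp, Ideal.mem_span_singleton]
  constructor
  · intro hdvd
    have h2 : E (MvPolynomial.X 1 ^ p - MvPolynomial.X 0 ^ m) ∣ E f := by
      rw [hEg]
      exact (neg_dvd).mpr hdvd
    have := map_dvd (E.symm : (ℂ[X])[X] →+* MvPolynomial (Fin 2) ℂ) h2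
    simpa using this
  · intro hdvd
    have h2 := map_dvd (E : MvPolynomial (Fin 2) ℂ →+* (ℂ[X])[X]) hdvd
    rw [show (E : MvPolynomial (Fin 2) ℂ →+* (ℂ[X])[X]) (MvPolynomial.X 1 ^ p - MvPolynomial.X 0 ^ m) = -(X ^ m - C (X ^ p)) from hEg] at h2
    exact (neg_dvd).mp (dvd_trans (dvd_refl _) (by simpa using h2))

lemma g_ne_zero (m p : ℕ) (hm : 0 < m) :
    (MvPolynomial.X 1 ^ p - MvPolynomial.X 0 ^ m : MvPolynomial (Fin 2) ℂ) ≠ 0 := by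
  intro h
  have := congrArg (MvPolynomial.aeval (![0, 1] : Fin 2 → ℂ)) h
  simp [zero_pow hm.ne'] at this


lemma tpow_aux {F : Type*} [Field F] {u z : F} (hu : u ≠ 0) (hz : z ≠ 0) (m p : ℕ)
    (a b : ℤ) (hab : a * m + b * p = 1) (hrel : z ^ p = u ^ m) :
    (z ^ a * u ^ b) ^ p = u ∧ (z ^ a * u ^ b) ^ m = z := by
  have hz'p : z ^ (p : ℤ) = u ^ (m : ℤ) := by rw [zpow_natCast, zpow_natCast]; exact hrel
  constructor
  · calc (z ^ a * u ^ b) ^ p = (z ^ a * u ^ b) ^ (p : ℤ) := (zpow_natCast _ p).symm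
      _ = (z ^ a) ^ (p:ℤ) * (u ^ b) ^ (p:ℤ) := mul_zpow _ _ _
      _ = (z ^ (p:ℤ)) ^ a * u ^ (b * p) := by
          rw [← zpow_mul, ← zpow_mul, ← zpow_mul, mul_comm a (p:ℤ)]
      _ = u ^ ((m:ℤ) * a) * u ^ (b * p) := by rw [hz'p, ← zpow_mul]
      _ = u ^ ((m:ℤ) * a + b * p) := (zpow_add₀ hu _ _).symm
      _ = u ^ (1:ℤ) := by rw [show (m:ℤ) * a + b * p = 1 by linarith [hab]]
      _ = u := zpow_one u
  · calc (z ^ a * u ^ b) ^ m = (z ^ a * u ^ b) ^ (m : ℤ) := (zpow_natCast _ m).symm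
      _ = (z ^ a) ^ (m:ℤ) * (u ^ b) ^ (m:ℤ) := mul_zpow _ _ _
      _ = z ^ (a * m) * (u ^ (m:ℤ)) ^ b := by
          rw [← zpow_mul, ← zpow_mul, ← zpow_mul, mul_comm b (m:ℤ)]
      _ = z ^ (a * m) * z ^ ((p:ℤ) * b) := by rw [← hz'p, ← zpow_mul]
      _ = z ^ (a * m + (p:ℤ) * b) := (zpow_add₀ hz _ _).symm
      _ = z ^ (1:ℤ) := by rw [show (a * m + (p:ℤ) * b : ℤ) = 1 by linarith [hab]]
      _ = z := zpow_one z

end CuspAux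

open MvPolynomial

/-- The ring of the irreducible curve singularity `z^p = u^m`, `gcd(m,p) = 1`. -/
noncomputable abbrev CuspRing (m p : ℕ) : Type :=
  MvPolynomial (Fin 2) ℂ ⧸
    Ideal.span {(X 1 ^ p - X 0 ^ m : MvPolynomial (Fin 2) ℂ)}

set_option maxHeartbeats 1000000 in
/-- For coprime `m, p ≥ 1`, the polynomial `Z^p - U^m` is irreducible in `ℂ[U,Z]`, so
`R = ℂ[U,Z]/(Z^p - U^m)` is a domain; moreover there is `t` in the fraction field `F` of `R`
with `t^p = u` and `t^m = z`, and the integral closure of `R` in `F` is the `ℂ`-subalgebra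
of `F` generated by `t` (i.e. the image of `ℂ[T]` under evaluation at `t`). -/
theorem cusp_normalization (m p : ℕ) (hm : 1 ≤ m) (hp : 1 ≤ p) (hmp : Nat.Coprime m p) :
    Irreducible (X 1 ^ p - X 0 ^ m : MvPolynomial (Fin 2) ℂ) ∧
    IsDomain (CuspRing m p) ∧
    ∃ t : FractionRing (CuspRing m p),
      t ^ p = algebraMap (CuspRing m p) (FractionRing (CuspRing m p))
          (Ideal.Quotient.mk _ (X 0)) ∧
      t ^ m = algebraMap (CuspRing m p) (FractionRing (CuspRing m p))
          (Ideal.Quotient.mk _ (X 1)) ∧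
      (integralClosure (CuspRing m p) (FractionRing (CuspRing m p)) :
          Set (FractionRing (CuspRing m p))) =
        Set.range fun P : Polynomial ℂ =>
          Polynomial.eval₂
            ((algebraMap (CuspRing m p) (FractionRing (CuspRing m p))).comp
              (algebraMap ℂ (CuspRing m p))) t P := by
  have hm0 : 0 < m := hm
  set g : MvPolynomial (Fin 2) ℂ := X 1 ^ p - X 0 ^ m with hg
  set I : Ideal (MvPolynomial (Fin 2) ℂ) := Ideal.span {g} with hI
  have hker := ker_phi m p hm0 hmp
  have hIker : I = RingHom.ker (phi m p) := by rw [hI, hker]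
  have hIprime : I.IsPrime := by rw [hIker]; exact RingHom.ker_isPrime _
  have hgne := g_ne_zero m p hm0
  have hirr : Irreducible g := ((Ideal.span_singleton_prime hgne).mp hIprime).irreducible
  haveI hdom : IsDomain (CuspRing m p) := Ideal.Quotient.isDomain I
  refine ⟨hirr, hdom, ?_⟩
  -- basic elements
  set u0 : CuspRing m p := Ideal.Quotient.mk I (X 0) with hu0def
  set z0 : CuspRing m p := Ideal.Quotient.mk I (X 1) with hz0def
  set u' : FractionRing (CuspRing m p) :=
    algebraMap (CuspRing m p) (FractionRing (CuspRing m p)) u0 with hu'def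
  set z' : FractionRing (CuspRing m p) :=
    algebraMap (CuspRing m p) (FractionRing (CuspRing m p)) z0 with hz'def
  have hu0 : u0 ≠ 0 := by
    intro h
    rw [hu0def, Ideal.Quotient.eq_zero_iff_mem, hIker, RingHom.mem_ker, phi_X0] at h
    exact pow_ne_zero p Polynomial.X_ne_zero h
  have hz0 : z0 ≠ 0 := by
    intro h
    rw [hz0def, Ideal.Quotient.eq_zero_iff_mem, hIker, RingHom.mem_ker, phi_X1] at h
    exact pow_ne_zero m Polynomial.X_ne_zero h
  have hu : u' ≠ 0 := fun h => hu0 (IsFractionRing.to_map_eq_zero_iff.mp h)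
  have hz : z' ≠ 0 := fun h => hz0 (IsFractionRing.to_map_eq_zero_iff.mp h)
  have hrel0 : z0 ^ p = u0 ^ m := by
    have hmem : g ∈ I := Ideal.subset_span rfl
    have h0 : Ideal.Quotient.mk I g = 0 := Ideal.Quotient.eq_zero_iff_mem.mpr hmem
    rw [hg, map_sub, map_pow, map_pow, sub_eq_zero] at h0
    exact h0
  have hrel : z' ^ p = u' ^ m := by
    rw [hu'def, hz'def]
    simpa only [map_pow] using
      congrArg (algebraMap (CuspRing m p) (FractionRing (CuspRing m p))) hrel0
  -- Bezout
  obtain ⟨a, b, hab⟩ := Nat.isCoprime_iff_coprime.mpr hmp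
  obtain ⟨htp, htm⟩ := tpow_aux hu hz m p a b hab hrel
  refine ⟨z' ^ a * u' ^ b, htp, htm, ?_⟩
  case _ =>
    have hle : ∀ a ∈ I, phi m p a = 0 := fun a ha => by
      rw [hIker] at ha; exact ha
    set φq : CuspRing m p →+* Polynomial ℂ := Ideal.Quotient.lift I (phi m p) hle with hφq
    have hφq_inj : Function.Injective φq := by
      intro x y hxy
      obtain ⟨x, rfl⟩ := Ideal.Quotient.mk_surjective x
      obtain ⟨y, rfl⟩ := Ideal.Quotient.mk_surjective y
      rw [hφq, Ideal.Quotient.lift_mk, Ideal.Quotient.lift_mk] at hxy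
      rw [Ideal.Quotient.eq, ← hker, RingHom.mem_ker, map_sub, hxy, sub_self]
    set χ : CuspRing m p →+* RatFunc ℂ :=
      (algebraMap (Polynomial ℂ) (RatFunc ℂ)).comp φq with hχ
    have hχ_inj : Function.Injective χ :=
      (IsFractionRing.injective (Polynomial ℂ) (RatFunc ℂ)).comp hφq_inj
    set ψ : FractionRing (CuspRing m p) →+* RatFunc ℂ := IsFractionRing.lift hχ_inj with hψ
    have hψa : ∀ r, ψ (algebraMap (CuspRing m p) (FractionRing (CuspRing m p)) r) = χ r :=
      fun r => IsFractionRing.lift_algebraMap hχ_inj r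
    have hψ_inj : Function.Injective ψ := ψ.injective
    have hψu : ψ u' = algebraMap (Polynomial ℂ) (RatFunc ℂ) (Polynomial.X ^ p) := by
      rw [hu'def, hψa, hχ, RingHom.comp_apply, hu0def, hφq, Ideal.Quotient.lift_mk, phi_X0]
    have hψz : ψ z' = algebraMap (Polynomial ℂ) (RatFunc ℂ) (Polynomial.X ^ m) := by
      rw [hz'def, hψa, hχ, RingHom.comp_apply, hz0def, hφq, Ideal.Quotient.lift_mk, phi_X1]
    have hjX : algebraMap (Polynomial ℂ) (RatFunc ℂ) Polynomial.X ≠ 0 := fun h =>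
      Polynomial.X_ne_zero (IsFractionRing.to_map_eq_zero_iff.mp h)
    have hψt : ψ (z' ^ a * u' ^ b) = algebraMap (Polynomial ℂ) (RatFunc ℂ) Polynomial.X := by
      rw [map_mul, map_zpow₀, map_zpow₀, hψu, hψz, map_pow, map_pow]
      set Y : RatFunc ℂ := algebraMap (Polynomial ℂ) (RatFunc ℂ) Polynomial.X with hY
      calc (Y ^ m) ^ a * (Y ^ p) ^ b
          = (Y ^ (m:ℤ)) ^ a * (Y ^ (p:ℤ)) ^ b := by rw [zpow_natCast, zpow_natCast]
        _ = Y ^ ((m:ℤ) * a + (p:ℤ) * b) := by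
            rw [← zpow_mul, ← zpow_mul, zpow_add₀ hjX]
        _ = Y ^ (1:ℤ) := by rw [show ((m:ℤ) * a + (p:ℤ) * b) = 1 by linarith [hab]]
        _ = Y := zpow_one Y
    have hcomp2 : ψ.comp ((algebraMap (CuspRing m p) (FractionRing (CuspRing m p))).comp
          (algebraMap ℂ (CuspRing m p)))
        = (algebraMap (Polynomial ℂ) (RatFunc ℂ)).comp (Polynomial.C : ℂ →+* Polynomial ℂ) := by
      apply RingHom.ext; intro c
      rw [RingHom.comp_apply, RingHom.comp_apply, hψa, hχ, RingHom.comp_apply]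
      have hca : algebraMap ℂ (CuspRing m p) c = Ideal.Quotient.mk I (MvPolynomial.C c) := rfl
      have harg : φq (algebraMap ℂ (CuspRing m p) c) = Polynomial.C c := by
        rw [hca, hφq, Ideal.Quotient.lift_mk, phi_C]
      rw [harg, RingHom.comp_apply]
    have hmemiff : ∀ x : FractionRing (CuspRing m p),
        x ∈ integralClosure (CuspRing m p) (FractionRing (CuspRing m p)) ↔
          IsIntegral (CuspRing m p) x :=
      fun x => mem_integralClosure_iff _ _
    have ht_int : IsIntegral (CuspRing m p) (z' ^ a * u' ^ b) :=
      ⟨Polynomial.X ^ p - Polynomial.C u0,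
        Polynomial.monic_X_pow_sub_C _ (by omega : p ≠ 0), by
          rw [Polynomial.eval₂_sub, Polynomial.eval₂_X_pow, Polynomial.eval₂_C, htp, sub_self]⟩
    apply Set.ext; intro x
    simp only [SetLike.mem_coe, Set.mem_range]
    constructor
    · intro hx
      obtain ⟨Q, hQm, hQ0⟩ := (hmemiff x).mp hx
      have h1 : Polynomial.eval₂ ((algebraMap (Polynomial ℂ) (RatFunc ℂ)).comp φq) (ψ x) Q
          = 0 := by
        have h2 := congrArg ψ hQ0
        rw [map_zero, Polynomial.hom_eval₂,
          show ψ.comp (algebraMap (CuspRing m p) (FractionRing (CuspRing m p))) = χ from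
            RingHom.ext hψa, hχ] at h2
        exact h2
      rw [← Polynomial.eval₂_map] at h1
      have hint : IsIntegral (Polynomial ℂ) (ψ x) := ⟨Q.map φq, hQm.map _, h1⟩
      obtain ⟨Q₀, hQ₀⟩ := IsIntegrallyClosed.isIntegral_iff.mp hint
      refine ⟨Q₀, hψ_inj ?_⟩
      show ψ (Polynomial.eval₂ _ _ Q₀) = ψ x
      rw [Polynomial.hom_eval₂, hcomp2, hψt, ← Polynomial.hom_eval₂, Polynomial.eval₂_C_X, hQ₀]
    · rintro ⟨P, rfl⟩
      show Polynomial.eval₂ _ _ P ∈ integralClosure _ _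
      induction P using Polynomial.induction_on with
      | C c =>
          rw [Polynomial.eval₂_C]
          refine (hmemiff _).mpr ?_
          rw [RingHom.comp_apply]
          exact isIntegral_algebraMap
      | add q r hq hr =>
          rw [Polynomial.eval₂_add]
          exact Subalgebra.add_mem _ hq hr
      | monomial n c _ =>
          rw [Polynomial.eval₂_mul, Polynomial.eval₂_C, Polynomial.eval₂_X_pow]
          refine Subalgebra.mul_mem _ ?_ (Subalgebra.pow_mem _ ((hmemiff _).mpr ht_int) _)
          rw [RingHom.comp_apply]
          exact (hmemiff _).mpr isIntegral_algebraMap
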